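/- arXiv:2001.10349 — 2 statements merged into one kernel-verified Lean document; each statement's English description precedes it below -/
import Mathlib

section
/- Let S_p ≻ 0 (symmetric) and G_p, R_p be N×N real matrices, p,q ∈ {1,…,P}, with A_cl,p := A_p − B R_p G_p^{-1}. Suppose for all p, q the block matrix [[G_p + G_pᵀ − S_p, (A_p G_p − B R_p)ᵀ],[A_p G_p − B R_p, S_q]] ≻ 0. Then for all p, q: A_cl,pᵀ S_q^{-1} A_cl,p − S_p^{-1} ≺ 0, where K_p = R_p G_p^{-1}. -/
/-!
Write `C = A_p G_p - B R_p`. The Schur complement of the LMI with respect to its block `S_q` gives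
`G_p + G_pᵀ - S_p ≻ Cᵀ S_q⁻¹ C`, and `Gᵀ S⁻¹ G - (G + Gᵀ - S) = (G - S)ᵀ S⁻¹ (G - S) ⪰ 0` upgrades
this to `G_pᵀ S_p⁻¹ G_p ≻ Cᵀ S_q⁻¹ C`. The upper-left block gives `G_p + G_pᵀ ≻ S_p ≻ 0`, so `G_p`
is invertible, and the congruence by `G_p⁻¹` yields `S_p⁻¹ ≻ A_clᵀ S_q⁻¹ A_cl`, because
`C G_p⁻¹ = A_cl`.
-/

open Matrix
open scoped MatrixOrder ComplexOrder

namespace Matrix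

variable {𝕜 m n : Type*} [RCLike 𝕜]

theorem PosDef.of_fromBlocks₁₁ {A : Matrix m m 𝕜} {B : Matrix m n 𝕜} {C : Matrix n m 𝕜}
    {D : Matrix n n 𝕜} (h : (fromBlocks A B C D).PosDef) : A.PosDef :=
  h.submatrix Sum.inl_injective

theorem PosDef.of_fromBlocks₂₂ {A : Matrix m m 𝕜} {B : Matrix m n 𝕜} {C : Matrix n m 𝕜}
    {D : Matrix n n 𝕜} (h : (fromBlocks A B C D).PosDef) : D.PosDef :=
  h.submatrix Sum.inr_injective

variable [Fintype n] [DecidableEq n]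

theorem isUnit_of_posDef_add_conjTranspose {G : Matrix n n 𝕜} (h : (G + Gᴴ).PosDef) :
    IsUnit G := by
  refine mulVec_injective_iff_isUnit.mp fun x y hxy => ?_
  rw [← sub_eq_zero]
  by_contra hne
  have hG : G *ᵥ (x - y) = 0 := by rw [mulVec_sub, hxy, sub_self]
  have := h.dotProduct_mulVec_pos hne
  rw [add_mulVec, dotProduct_add, hG, dotProduct_zero, zero_add, dotProduct_mulVec,
    ← star_mulVec, hG] at this
  simp at this

theorem add_conjTranspose_sub_le_conjTranspose_mul_inv_mul {S : Matrix n n 𝕜} (hS : S.PosDef)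
    (G : Matrix n n 𝕜) : G + Gᴴ - S ≤ Gᴴ * S⁻¹ * G := by
  have := hS.isUnit.invertible
  have hsquare : Gᴴ * S⁻¹ * G - (G + Gᴴ - S) = (G - S)ᴴ * S⁻¹ * (G - S) := by
    simp only [Matrix.mul_assoc, conjTranspose_sub, hS.1.eq, sub_mul, mul_sub, one_mul, mul_one,
      mul_inv_of_invertible, inv_mul_of_invertible]
    abel
  rw [le_iff, hsquare]
  exact hS.inv.posSemidef.conjTranspose_mul_mul_same _

variable [Fintype m]

theorem PosDef.schurComplement_of_fromBlocks₂₂ {A : Matrix m m 𝕜} {C : Matrix n m 𝕜}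
    {D : Matrix n n 𝕜} (h : (fromBlocks A Cᴴ C D).PosDef) : (A - Cᴴ * D⁻¹ * C).PosDef := by
  have hD := h.of_fromBlocks₂₂
  have := hD.isUnit.invertible
  have hA : (A - Cᴴ * D⁻¹ * C).IsHermitian := by
    simpa using (IsHermitian.fromBlocks₂₂ A Cᴴ hD.1).mp (by simpa using h.1)
  refine .of_dotProduct_mulVec_pos hA fun x hx => ?_
  set y := -((D⁻¹ * C) *ᵥ x)
  have hxy : x ⊕ᵥ y ≠ 0 := fun h0 => hx (by simpa using congrArg (· ∘ Sum.inl) h0)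
  have hschur := schur_complement_eq₂₂ A Cᴴ x y hD.1
  rw [conjTranspose_conjTranspose, add_neg_cancel, dotProduct_zero, zero_add] at hschur
  have := h.dotProduct_mulVec_pos hxy
  rwa [dotProduct_mulVec, hschur, ← dotProduct_mulVec] at this

end Matrix

section VertexLMI

variable {𝕜 n : Type*} [RCLike 𝕜] [Fintype n] [DecidableEq n]

/-- The LMI at the vertex pair `(p, q)`, with `S = S_p`, `S' = S_q` and `C = A_p G_p - B R_p`. -/
def vertexLMI (S S' G C : Matrix n n 𝕜) : Matrix (n ⊕ n) (n ⊕ n) 𝕜 :=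
  fromBlocks (G + Gᴴ - S) Cᴴ C S'

theorem isUnit_of_posDef_vertexLMI {S S' G C : Matrix n n 𝕜} (hS : S.PosDef)
    (h : (vertexLMI S S' G C).PosDef) : IsUnit G :=
  isUnit_of_posDef_add_conjTranspose <| by
    simpa using h.of_fromBlocks₁₁.add_posSemidef hS.posSemidef

theorem posDef_lyapunov_of_posDef_vertexLMI {S S' G C : Matrix n n 𝕜} (hS : S.PosDef)
    (h : (vertexLMI S S' G C).PosDef) :
    (S⁻¹ - (C * G⁻¹)ᴴ * S'⁻¹ * (C * G⁻¹)).PosDef := by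
  have hG := isUnit_of_posDef_vertexLMI hS h
  have hschur : (G + Gᴴ - S - Cᴴ * S'⁻¹ * C).PosDef := h.schurComplement_of_fromBlocks₂₂
  have hK : (Gᴴ * S⁻¹ * G - Cᴴ * S'⁻¹ * C).PosDef := by
    rw [← sub_add_sub_cancel' (G + Gᴴ - S)]
    exact hschur.add_posSemidef (add_conjTranspose_sub_le_conjTranspose_mul_inv_mul hS G)
  have hcongr := (isUnit_nonsing_inv_iff.mpr hG).posDef_star_left_conjugate_iff.mpr hK
  convert hcongr using 1
  have := hG.invertible
  simp [mul_sub, sub_mul, star_eq_conjTranspose, conjTranspose_nonsing_inv, Matrix.mul_assoc]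

end VertexLMI

theorem stmt_10_general (N P : ℕ)
    (A G R S : Fin P → Matrix (Fin N) (Fin N) ℝ)
    (B : Matrix (Fin N) (Fin N) ℝ)
    (hS : ∀ p, (S p).PosDef)
    (hLMI : ∀ p q, (Matrix.fromBlocks
        (G p + (G p)ᵀ - S p) (A p * G p - B * R p)ᵀ
        (A p * G p - B * R p) (S q)).PosDef) :
    ∀ p q, ((S p)⁻¹ -
        (A p - B * (R p * (G p)⁻¹))ᵀ * (S q)⁻¹ *
          (A p - B * (R p * (G p)⁻¹))).PosDef := by
  intro p q
  have hvertex : (vertexLMI (S p) (S q) (G p) (A p * G p - B * R p)).PosDef := by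
    simpa only [vertexLMI, conjTranspose_eq_transpose_of_trivial] using hLMI p q
  have hG := isUnit_of_posDef_vertexLMI (hS p) hvertex
  have hclosedLoop : (A p * G p - B * R p) * (G p)⁻¹ = A p - B * (R p * (G p)⁻¹) := by
    rw [Matrix.sub_mul, mul_nonsing_inv_cancel_right _ _ ((isUnit_iff_isUnit_det _).mp hG),
      Matrix.mul_assoc]
  simpa only [hclosedLoop, conjTranspose_eq_transpose_of_trivial] using
    posDef_lyapunov_of_posDef_vertexLMI (hS p) hvertex

theorem stmt_10 (N P : ℕ)
    (A G R S : Fin P → Matrix (Fin N) (Fin N) ℝ)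
    (B : Matrix (Fin N) (Fin N) ℝ)
    (hS : ∀ p, (S p).PosDef) (hSsym : ∀ p, (S p).IsSymm)
    (hLMI : ∀ p q, (Matrix.fromBlocks
        (G p + (G p)ᵀ - S p) (A p * G p - B * R p)ᵀ
        (A p * G p - B * R p) (S q)).PosDef) :
    ∀ p q, ((S p)⁻¹ -
        (A p - B * (R p * (G p)⁻¹))ᵀ * (S q)⁻¹ *
          (A p - B * (R p * (G p)⁻¹))).PosDef :=
  stmt_10_general N P A G R S B hS hLMI
end

section
/- Let F_p ∈ ℝ^{N×N}, p = 1,…,P, and suppose there exist symmetric positive definite matrices P_p ∈ ℝ^{N×N} such that F_pᵀ P_q F_p − P_p ≺ 0 for all p, q ∈ {1,…,P}. Let (θ_{·,t})_{t∈ℕ} be any sequence with θ_{p,t} ≥ 0 and ∑_p θ_{p,t} = 1 for each t, and consider x_{t+1} = (∑_p θ_{p,t} F_p) x_t. Then the function V(t, x) = xᵀ (∑_p θ_{p,t} P_p) x satisfies V(t+1, x_{t+1}) < V(t, x_t) for all x_t ≠ 0. -/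
open Matrix

private lemma quad_convexOn {N : ℕ} (A : Matrix (Fin N) (Fin N) ℝ)
    (hA : ∀ y, 0 ≤ y ⬝ᵥ A *ᵥ y) :
    ConvexOn ℝ Set.univ (fun y : Fin N → ℝ => y ⬝ᵥ A *ᵥ y) := by
  refine ⟨convex_univ, fun a _ b _ s u hs hu hsu => ?_⟩
  have key : a ⬝ᵥ A *ᵥ b + b ⬝ᵥ A *ᵥ a ≤ a ⬝ᵥ A *ᵥ a + b ⬝ᵥ A *ᵥ b := by
    have h := hA (a - b)
    simp only [Matrix.mulVec_sub, sub_dotProduct, dotProduct_sub] at h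
    linarith
  simp only [Matrix.mulVec_add, Matrix.mulVec_smul, add_dotProduct,
    smul_dotProduct, dotProduct_add, dotProduct_smul,
    smul_eq_mul]
  have hu1 : u = 1 - s := by linarith
  subst hu1
  nlinarith [mul_nonneg hs hu, key, mul_le_mul_of_nonneg_left key (mul_nonneg hs hu)]

theorem stmt_16 (N P : ℕ) (hP : 1 ≤ P)
    (F Pm : Fin P → Matrix (Fin N) (Fin N) ℝ)
    (hPsym : ∀ p, (Pm p).IsSymm) (hPpd : ∀ p, (Pm p).PosDef)
    (hvertex : ∀ p q, (Pm p - (F p)ᵀ * Pm q * F p).PosDef)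
    (θ : ℕ → Fin P → ℝ)
    (hθ : ∀ t p, 0 ≤ θ t p) (hsum : ∀ t, ∑ p, θ t p = 1)
    (x : ℕ → Fin N → ℝ)
    (hx : ∀ t, x (t + 1) = (∑ p, θ t p • F p).mulVec (x t)) :
    ∀ t, x t ≠ 0 →
      dotProduct (x (t + 1))
          ((∑ p, θ (t + 1) p • Pm p).mulVec (x (t + 1)))
        < dotProduct (x t)
            ((∑ p, θ t p • Pm p).mulVec (x t)) := by
  intro t hxt
  set v := x t with hv
  set A : Matrix (Fin N) (Fin N) ℝ := ∑ q, θ (t + 1) q • Pm q with hA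
  set y : Fin P → (Fin N → ℝ) := fun p => (F p) *ᵥ v with hy
  have sum_mv : ∀ (M : Fin P → Matrix (Fin N) (Fin N) ℝ) (w : Fin N → ℝ),
      (∑ p, M p) *ᵥ w = ∑ p, M p *ᵥ w := by
    intro M w
    ext i
    simp only [Matrix.mulVec, dotProduct, Finset.sum_apply,
      Finset.sum_fn, Finset.sum_apply, Matrix.sum_apply, Finset.sum_mul]
    exact Finset.sum_comm
  -- expand quadratic forms against sums of matrices
  have quadsum : ∀ (w : Fin N → ℝ) (c : Fin P → ℝ) (M : Fin P → Matrix (Fin N) (Fin N) ℝ),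
      w ⬝ᵥ (∑ p, c p • M p) *ᵥ w = ∑ p, c p * (w ⬝ᵥ (M p) *ᵥ w) := by
    intro w c M
    rw [sum_mv]
    simp only [dotProduct, Finset.sum_apply, Matrix.smul_mulVec,
      Pi.smul_apply, smul_eq_mul, Finset.mul_sum]
    rw [Finset.sum_comm]
    refine Finset.sum_congr rfl fun p _ => Finset.sum_congr rfl fun i _ => by ring
  -- A is positive semidefinite as a quadratic form
  have hApsd : ∀ w, 0 ≤ w ⬝ᵥ A *ᵥ w := by
    intro w
    rw [hA, quadsum]
    refine Finset.sum_nonneg fun q _ => mul_nonneg (hθ _ q) ?_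
    rcases eq_or_ne w 0 with h | h
    · simp [h]
    · exact le_of_lt ((hPpd q).dotProduct_mulVec_pos h)
  -- key vertex inequality on the trajectory point
  have hkey : ∀ p q, y p ⬝ᵥ (Pm q) *ᵥ y p < v ⬝ᵥ (Pm p) *ᵥ v := by
    intro p q
    have h := (hvertex p q).dotProduct_mulVec_pos hxt
    simp only [star_trivial] at h
    have hexp : v ⬝ᵥ ((F p)ᵀ * Pm q * F p) *ᵥ v = y p ⬝ᵥ (Pm q) *ᵥ y p := by
      rw [← Matrix.mulVec_mulVec, ← Matrix.mulVec_mulVec,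
        Matrix.dotProduct_mulVec v (F p)ᵀ, Matrix.vecMul_transpose]
    rw [Matrix.sub_mulVec, dotProduct_sub, hexp] at h
    linarith
  -- for each p, quadratic form of y p against A is < v ⬝ Pm p v
  have hstep : ∀ p, y p ⬝ᵥ A *ᵥ y p ≤ v ⬝ᵥ (Pm p) *ᵥ v := by
    intro p
    rw [hA, quadsum]
    calc ∑ q, θ (t+1) q * (y p ⬝ᵥ (Pm q) *ᵥ y p)
        ≤ ∑ q, θ (t+1) q * (v ⬝ᵥ (Pm p) *ᵥ v) := by
          refine Finset.sum_le_sum fun q _ => ?_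
          exact mul_le_mul_of_nonneg_left (le_of_lt (hkey p q)) (hθ _ q)
      _ = v ⬝ᵥ (Pm p) *ᵥ v := by
          rw [← Finset.sum_mul, hsum, one_mul]
  -- existence of positive weights
  have hpos : ∀ s : ℕ, ∃ p, 0 < θ s p := by
    intro s
    by_contra h
    push_neg at h
    have : (∑ p, θ s p) ≤ 0 := Finset.sum_nonpos fun p _ => h p
    rw [hsum] at this; linarith
  obtain ⟨p₀, hp₀⟩ := hpos t
  obtain ⟨q₀, hq₀⟩ := hpos (t + 1)
  -- strict version at p₀
  have hstrict : y p₀ ⬝ᵥ A *ᵥ y p₀ < v ⬝ᵥ (Pm p₀) *ᵥ v := by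
    rw [hA, quadsum]
    calc ∑ q, θ (t+1) q * (y p₀ ⬝ᵥ (Pm q) *ᵥ y p₀)
        < ∑ q, θ (t+1) q * (v ⬝ᵥ (Pm p₀) *ᵥ v) := by
          refine Finset.sum_lt_sum (fun q _ =>
            mul_le_mul_of_nonneg_left (le_of_lt (hkey p₀ q)) (hθ _ q))
            ⟨q₀, Finset.mem_univ q₀, ?_⟩
          exact mul_lt_mul_of_pos_left (hkey p₀ q₀) hq₀
      _ = v ⬝ᵥ (Pm p₀) *ᵥ v := by
          rw [← Finset.sum_mul, hsum, one_mul]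
  -- x (t+1) as convex combination of the y p
  have hxt1 : x (t + 1) = ∑ p, θ t p • y p := by
    rw [hx t, sum_mv]
    congr 1; ext p
    rw [Matrix.smul_mulVec]
  -- Jensen's inequality
  have hjensen : x (t + 1) ⬝ᵥ A *ᵥ x (t + 1) ≤ ∑ p, θ t p * (y p ⬝ᵥ A *ᵥ y p) := by
    rw [hxt1]
    have := (quad_convexOn A hApsd).map_sum_le (t := Finset.univ) (w := θ t) (p := y)
      (fun p _ => hθ t p) (hsum t) (fun p _ => Set.mem_univ _)
    simpa [smul_eq_mul] using this
  calc x (t + 1) ⬝ᵥ A *ᵥ x (t + 1)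
      ≤ ∑ p, θ t p * (y p ⬝ᵥ A *ᵥ y p) := hjensen
    _ < ∑ p, θ t p * (v ⬝ᵥ (Pm p) *ᵥ v) := by
        refine Finset.sum_lt_sum (fun p _ =>
          mul_le_mul_of_nonneg_left (hstep p) (hθ t p))
          ⟨p₀, Finset.mem_univ p₀, mul_lt_mul_of_pos_left hstrict hp₀⟩
    _ = v ⬝ᵥ (∑ p, θ t p • Pm p) *ᵥ v := (quadsum v (θ t) Pm).symm
end
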